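/- Let B be a finite-dimensional unital associative K-algebra and let A be an F-subalgebra of B. Then A and its Zariski closure cl(A) satisfy exactly the same polynomial identities over F: an element f of the free associative F-algebra F⟨x₁,x₂,…⟩ is a polynomial identity of A if and only if it is a polynomial identity of cl(A). -/

import Mathlib

/-- The Zariski closure of a subset `A` of a finite-dimensional `K`-vector space `B`,
with respect to the coordinates given by the fixed basis `β`. -/
def zcl {K B : Type*} [Field K] [AddCommGroup B] [Module K B] {n : ℕ}
    (β : Module.Basis (Fin n) K B) (A : Set B) : Set B :=
  {x | ∀ f : MvPolynomial (Fin n) K,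
    (∀ a ∈ A, MvPolynomial.eval (fun i => β.repr a i) f = 0) →
      MvPolynomial.eval (fun i => β.repr x i) f = 0}

/-!
Fix all variables of an element `f` of the free algebra except one. In the coordinates of `B`
the remaining map `x ↦ f(…, x, …)` is polynomial, so if it vanishes on `A` it vanishes on
`cl(A)`. Since `f` involves only finitely many variables, the others can be set to a fixed
element of `A`, and the involved ones moved from `A` to `cl(A)` one at a time. Conversely,
`A ⊆ cl(A)`; and `cl(∅) = ∅` settles the case of empty `A`.
-/

section ZariskiClosure

variable {K B : Type*} [Field K] [AddCommGroup B] [Module K B] {n : ℕ}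
  (β : Module.Basis (Fin n) K B)

lemma subset_zcl (A : Set B) : A ⊆ zcl β A :=
  fun a ha _ hf => hf a ha

lemma zcl_empty : zcl β (∅ : Set B) = ∅ :=
  Set.eq_empty_of_forall_notMem fun x hx => by
    simpa using hx (MvPolynomial.C 1) (by simp)

def IsPolyMap (g : B → B) : Prop :=
  ∀ i : Fin n, ∃ p : MvPolynomial (Fin n) K,
    ∀ x, β.repr (g x) i = MvPolynomial.eval (fun j => β.repr x j) p

variable {β}

lemma isPolyMap_const (c : B) : IsPolyMap β fun _ => c :=
  fun i => ⟨MvPolynomial.C (β.repr c i), fun x => by simp⟩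

lemma isPolyMap_id : IsPolyMap β fun x => x :=
  fun i => ⟨MvPolynomial.X i, fun x => by simp⟩

lemma IsPolyMap.add {g h : B → B} (hg : IsPolyMap β g) (hh : IsPolyMap β h) :
    IsPolyMap β fun x => g x + h x := by
  intro i
  obtain ⟨p, hp⟩ := hg i
  obtain ⟨q, hq⟩ := hh i
  exact ⟨p + q, fun x => by simp [hp x, hq x]⟩

lemma IsPolyMap.eq_zero_of_mem_zcl {g : B → B} (hg : IsPolyMap β g) {A : Set B}
    (hA : ∀ a ∈ A, g a = 0) {x : B} (hx : x ∈ zcl β A) : g x = 0 := by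
  refine β.repr.map_eq_zero_iff.mp (Finsupp.ext fun i => ?_)
  obtain ⟨p, hp⟩ := hg i
  rw [hp]
  exact hx p fun a ha => by rw [← hp, hA a ha, map_zero, Finsupp.zero_apply]

end ZariskiClosure

lemma IsPolyMap.mul {K B : Type*} [Field K] [Ring B] [Algebra K B] {n : ℕ}
    {β : Module.Basis (Fin n) K B} {g h : B → B}
    (hg : IsPolyMap β g) (hh : IsPolyMap β h) : IsPolyMap β fun x => g x * h x := by
  choose P hP using hg
  choose Q hQ using hh
  intro i
  refine ⟨∑ j, ∑ k, P j * Q k * MvPolynomial.C (β.repr (β j * β k) i), fun x => ?_⟩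
  have expand : g x * h x =
      ∑ j, ∑ k, (β.repr (g x) j * β.repr (h x) k) • (β j * β k) := by
    conv_lhs => rw [← β.sum_repr (g x), ← β.sum_repr (h x)]
    simp only [Finset.sum_mul_sum, smul_mul_smul_comm]
  change β.repr (g x * h x) i = _
  rw [expand]
  simp only [map_sum, map_smul, Finsupp.coe_finsetSum, Finset.sum_apply,
    Finsupp.coe_smul, Pi.smul_apply, smul_eq_mul, map_mul, MvPolynomial.eval_C, hP, hQ]

section FreeAlgebra

variable {F ι : Type*} [CommSemiring F]

lemma FreeAlgebra.exists_finset_lift_eq {B : Type*} [Semiring B] [Algebra F B]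
    (f : FreeAlgebra F ι) :
    ∃ s : Finset ι, ∀ σ τ : ι → B, Set.EqOn σ τ s → lift F σ f = lift F τ f := by
  classical
  induction f using FreeAlgebra.induction with
  | grade0 r => exact ⟨∅, fun σ τ _ => by simp⟩
  | grade1 j => exact ⟨{j}, fun σ τ h => by simpa using h (Finset.mem_singleton_self j)⟩
  | add a b ha hb =>
    obtain ⟨s, hs⟩ := ha
    obtain ⟨t, ht⟩ := hb
    refine ⟨s ∪ t, fun σ τ h => ?_⟩
    rw [map_add, map_add, hs σ τ (h.mono (by simp)), ht σ τ (h.mono (by simp))]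
  | mul a b ha hb =>
    obtain ⟨s, hs⟩ := ha
    obtain ⟨t, ht⟩ := hb
    refine ⟨s ∪ t, fun σ τ h => ?_⟩
    rw [map_mul, map_mul, hs σ τ (h.mono (by simp)), ht σ τ (h.mono (by simp))]

variable {K B : Type*} [Field K] [Ring B] [Algebra K B] [Algebra F B] {n : ℕ}
  {β : Module.Basis (Fin n) K B} [DecidableEq ι]

lemma isPolyMap_lift_update (f : FreeAlgebra F ι) (σ : ι → B) (m : ι) :
    IsPolyMap β fun x => FreeAlgebra.lift F (Function.update σ m x) f := by
  induction f using FreeAlgebra.induction with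
  | grade0 r => simpa using isPolyMap_const (algebraMap F B r)
  | grade1 j =>
    by_cases hj : j = m
    · subst hj
      simpa using isPolyMap_id
    · simpa [Function.update_of_ne hj] using isPolyMap_const (σ j)
  | add a b ha hb => simpa only [map_add] using ha.add hb
  | mul a b ha hb => simpa only [map_mul] using ha.mul hb

lemma lift_piecewise_eq_zero_of_forall_mem {A : Set B} {f : FreeAlgebra F ι}
    (hf : ∀ σ : ι → B, (∀ i, σ i ∈ A) → FreeAlgebra.lift F σ f = 0) (s : Finset ι)
    {σ τ : ι → B} (hσ : ∀ i, σ i ∈ zcl β A) (hτ : ∀ i, τ i ∈ A) :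
    FreeAlgebra.lift F (s.piecewise σ τ) f = 0 := by
  induction s using Finset.induction_on generalizing τ with
  | empty => simpa using hf τ hτ
  | insert m s hm ih =>
    rw [Finset.piecewise_insert]
    refine (isPolyMap_lift_update f _ m).eq_zero_of_mem_zcl (fun a ha => ?_) (hσ m)
    rw [s.update_piecewise_of_notMem σ τ hm]
    refine ih fun i => ?_
    rcases eq_or_ne i m with rfl | hi
    · simpa using ha
    · simpa [Function.update_of_ne hi] using hτ i

end FreeAlgebra

theorem stmt_5_general {K F B : Type*} [Field K] [Field F]
    [Ring B] [Algebra K B] [Algebra F B]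
    {n : ℕ} (β : Module.Basis (Fin n) K B) (A : Set B) :
    ∀ f : FreeAlgebra F ℕ,
      ((∀ σ : ℕ → B, (∀ i, σ i ∈ A) → FreeAlgebra.lift F σ f = 0) ↔
        (∀ σ : ℕ → B, (∀ i, σ i ∈ zcl β A) → FreeAlgebra.lift F σ f = 0)) := by
  intro f
  refine ⟨fun hf σ hσ => ?_, fun hf σ hσ => hf σ fun i => subset_zcl β A (hσ i)⟩
  rcases A.eq_empty_or_nonempty with rfl | ⟨a, ha⟩
  · simpa [zcl_empty] using hσ 0
  obtain ⟨s, hs⟩ := FreeAlgebra.exists_finset_lift_eq (B := B) f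
  rw [hs σ (s.piecewise σ fun _ => a) fun i hi => (s.piecewise_eq_of_mem _ _ hi).symm]
  exact lift_piecewise_eq_zero_of_forall_mem hf s hσ fun _ => ha

/-- an `F`-subalgebra `A` of `B` and its Zariski closure `cl(A)` satisfy
exactly the same polynomial identities over `F`: an element `f` of the free associative
`F`-algebra `F⟨x₁,x₂,…⟩` is a polynomial identity of `A` iff it is one of `cl(A)`. -/
theorem stmt_5 {K F B : Type*} [Field K] [IsAlgClosed K] [Field F] [Algebra F K]
    [Ring B] [Algebra K B] [Algebra F B] [IsScalarTower F K B]
    {n : ℕ} (β : Module.Basis (Fin n) K B) (A : Set B)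
    (h1 : (1 : B) ∈ A)
    (hadd : ∀ x ∈ A, ∀ y ∈ A, x + y ∈ A)
    (hsmul : ∀ (c : F), ∀ x ∈ A, c • x ∈ A)
    (hmul : ∀ x ∈ A, ∀ y ∈ A, x * y ∈ A) :
    ∀ f : FreeAlgebra F ℕ,
      ((∀ σ : ℕ → B, (∀ i, σ i ∈ A) → FreeAlgebra.lift F σ f = 0) ↔
        (∀ σ : ℕ → B, (∀ i, σ i ∈ zcl β A) → FreeAlgebra.lift F σ f = 0)) :=
  stmt_5_general β A
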